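/- The function z ↦ 1 - z² ψ'(z) is subadditive on (0, ∞): for all x, y > 0, 1 - (x+y)² ψ'(x+y) ≤ (1 - x² ψ'(x)) + (1 - y² ψ'(y)). -/

import Mathlib

open Real

/-- The trigamma function: second derivative of `log ∘ Γ`. -/
noncomputable def trigamma (z : ℝ) : ℝ :=
  iteratedDeriv 2 (fun x => Real.log (Real.Gamma x)) z

/-!
Differentiating the Weierstrass series of `log Γ` twice gives `ψ'(z) = 1/z² + ∑_{n ≥ 1} 1/(z+n)²`,
so `(1 - z² ψ'(z))/z = -g(z)` with `g(z) = ∑_{n ≥ 1} z/(z+n)²`. Writing each term as a Laplace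
integral gives `g(z) = ∫₀^∞ e^{-s} φ(s/z) ds` with `φ(u) = u/(eᵘ - 1) = ∑_{n ≥ 1} u e^{-nu}`, and `φ`
is decreasing because `(eᵘ - 1)/u` is a secant slope of the convex exponential. Hence `g` is
nondecreasing, and a function `f` with `f(z)/z` nonincreasing on `(0, ∞)` is subadditive there.
-/

open Set Filter Topology MeasureTheory

theorem map_add_le_of_antitoneOn_div {f : ℝ → ℝ} (hf : AntitoneOn (fun z => f z / z) (Ioi 0))
    {x y : ℝ} (hx : 0 < x) (hy : 0 < y) : f (x + y) ≤ f x + f y := by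
  have hxy : 0 < x + y := add_pos hx hy
  have hqx : f (x + y) / (x + y) ≤ f x / x := hf hx hxy (le_add_of_nonneg_right hy.le)
  have hqy : f (x + y) / (x + y) ≤ f y / y := hf hy hxy (le_add_of_nonneg_left hx.le)
  calc f (x + y) = x * (f (x + y) / (x + y)) + y * (f (x + y) / (x + y)) := by
        field_simp
    _ ≤ x * (f x / x) + y * (f y / y) := by gcongr
    _ = f x + f y := by field_simp

lemma summable_one_div_nat_add_one_sq : Summable (fun n : ℕ => 1 / ((n : ℝ) + 1) ^ 2) := by
  simpa using (summable_nat_add_iff 1).2 (Real.summable_one_div_nat_pow.2 one_lt_two)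

lemma one_div_nat_add_one_sub_one_div_mem_Icc {y : ℝ} (hy : 0 ≤ y) (n : ℕ) :
    1 / ((n : ℝ) + 1) - 1 / (y + n + 1) ∈ Icc 0 (y * (1 / ((n : ℝ) + 1) ^ 2)) := by
  have hn : (0 : ℝ) < n + 1 := Nat.cast_add_one_pos n
  rw [add_assoc, div_sub_div _ _ hn.ne' (by positivity), one_mul, mul_one, add_sub_cancel_right,
    ← div_eq_mul_one_div]
  exact ⟨by positivity, div_le_div_of_nonneg_left hy (by positivity) (by nlinarith)⟩

lemma logGammaSeq_eq {z : ℝ} (hz : 0 < z) (n : ℕ) :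
    BohrMollerup.logGammaSeq z n = -log z - z * (harmonic n - log n) +
      ∑ k ∈ Finset.range n, (z / (k + 1) - log (1 + z / (k + 1))) := by
  induction n with
  | zero => simp [BohrMollerup.logGammaSeq]
  | succ n ih =>
    have hn : (0 : ℝ) < n + 1 := Nat.cast_add_one_pos n
    have hstep : BohrMollerup.logGammaSeq z (n + 1) = BohrMollerup.logGammaSeq z n +
        z * (log (n + 1) - log n) + log (n + 1) - log (z + (n + 1)) := by
      simp only [BohrMollerup.logGammaSeq, Nat.factorial_succ, Nat.cast_mul,
        Finset.sum_range_succ _ (n + 1), Nat.cast_add_one]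
      rw [log_mul hn.ne' (by positivity)]
      ring
    have hlog : log (1 + z / (n + 1)) = log (z + (n + 1)) - log (n + 1) := by
      rw [← log_div (by positivity) hn.ne', add_div, div_self hn.ne', add_comm]
    rw [hstep, ih, Finset.sum_range_succ, harmonic_succ, hlog]
    push_cast
    ring

theorem hasSum_sub_log_one_add_div {z : ℝ} (hz : 0 < z) :
    HasSum (fun n : ℕ => z / (n + 1) - log (1 + z / (n + 1)))
      (log (Gamma z) + log z + eulerMascheroniConstant * z) := by
  have hnonneg (n : ℕ) : 0 ≤ z / (n + 1) - log (1 + z / (n + 1)) := by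
    linarith [log_le_sub_one_of_pos (show 0 < 1 + z / (n + 1) by positivity)]
  refine (hasSum_iff_tendsto_nat_of_nonneg hnonneg _).2 ?_
  have h := ((BohrMollerup.tendsto_log_gamma hz).add_const (log z)).add
    (tendsto_harmonic_sub_log.mul_const z)
  refine h.congr fun n => ?_
  rw [logGammaSeq_eq hz]
  ring

noncomputable def digammaSeries (z : ℝ) : ℝ :=
  -eulerMascheroniConstant - 1 / z + ∑' n : ℕ, (1 / (n + 1) - 1 / (z + n + 1))

theorem hasDerivAt_log_Gamma {z : ℝ} (hz : 0 < z) :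
    HasDerivAt (fun x => log (Gamma x)) (digammaSeries z) z := by
  have hseries : HasDerivAt (fun x => ∑' n : ℕ, (x / (n + 1) - log (1 + x / (n + 1))))
      (∑' n : ℕ, (1 / (n + 1) - 1 / (z + n + 1))) z := by
    have hmem : z ∈ Ioo 0 (z + 1) := ⟨hz, lt_add_one z⟩
    refine hasDerivAt_tsum_of_isPreconnected
      (g := fun (n : ℕ) x => x / (n + 1) - log (1 + x / (n + 1)))
      (g' := fun (n : ℕ) y => 1 / (n + 1) - 1 / (y + n + 1))
      (summable_one_div_nat_add_one_sq.mul_left (z + 1))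
      isOpen_Ioo isPreconnected_Ioo (fun n y hy => ?_) (fun n y hy => ?_)
      hmem (hasSum_sub_log_one_add_div hz).summable hmem
    · have hpos : 0 < 1 + y / (n + 1) := by have := hy.1; positivity
      have hdiv := (hasDerivAt_id' y).div_const ((n : ℝ) + 1)
      refine (hdiv.fun_sub ((hdiv.const_add 1).log hpos.ne')).congr_deriv ?_
      field_simp
      ring
    · obtain ⟨h0, h1⟩ := one_div_nat_add_one_sub_one_div_mem_Icc hy.1.le n
      rw [Real.norm_of_nonneg h0]
      exact h1.trans (by gcongr; exact hy.2.le)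
  have heq : (fun x => ∑' n : ℕ, (x / (n + 1) - log (1 + x / (n + 1))) - log x
      - eulerMascheroniConstant * x) =ᶠ[𝓝 z] fun x => log (Gamma x) :=
    eventually_of_mem (Ioi_mem_nhds hz) fun x hx => by
      simp only [(hasSum_sub_log_one_add_div hx).tsum_eq]; ring
  refine HasDerivAt.congr_of_eventuallyEq ?_ heq.symm
  refine ((hseries.fun_sub (hasDerivAt_log hz.ne')).fun_sub
    ((hasDerivAt_id' z).const_mul eulerMascheroniConstant)).congr_deriv ?_
  rw [digammaSeries]
  ring

theorem hasDerivAt_digammaSeries {z : ℝ} (hz : 0 < z) :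
    HasDerivAt digammaSeries (1 / z ^ 2 + ∑' n : ℕ, 1 / (z + n + 1) ^ 2) z := by
  have hseries : HasDerivAt (fun x : ℝ => ∑' n : ℕ, (1 / ((n : ℝ) + 1) - 1 / (x + n + 1)))
      (∑' n : ℕ, 1 / (z + n + 1) ^ 2) z := by
    refine hasDerivAt_tsum_of_isPreconnected
      (g := fun (n : ℕ) (x : ℝ) => 1 / ((n : ℝ) + 1) - 1 / (x + n + 1))
      (g' := fun (n : ℕ) y => 1 / (y + n + 1) ^ 2) summable_one_div_nat_add_one_sq
      isOpen_Ioi isPreconnected_Ioi (fun n y hy => ?_) (fun n y hy => ?_)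
      (mem_Ioi.2 hz) ?_ (mem_Ioi.2 hz)
    · have hpos : y + n + 1 ≠ 0 := by have : 0 < y := hy; positivity
      simp only [one_div]
      refine ((((hasDerivAt_id' y).add_const _).add_const _).fun_inv hpos).const_sub _
        |>.congr_deriv ?_
      ring
    · have : 0 < y := hy
      rw [Real.norm_of_nonneg (by positivity)]
      gcongr
      linarith
    · exact (summable_one_div_nat_add_one_sq.mul_left z).of_nonneg_of_le
        (fun n => (one_div_nat_add_one_sub_one_div_mem_Icc hz.le n).1)
        (fun n => (one_div_nat_add_one_sub_one_div_mem_Icc hz.le n).2)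
  have hinv : HasDerivAt (fun x : ℝ => -eulerMascheroniConstant - 1 / x) (1 / z ^ 2) z := by
    simp only [one_div]
    exact ((hasDerivAt_inv hz.ne').const_sub _).congr_deriv (by ring)
  exact hinv.fun_add hseries

theorem trigamma_eq_tsum {z : ℝ} (hz : 0 < z) :
    trigamma z = 1 / z ^ 2 + ∑' n : ℕ, 1 / (z + n + 1) ^ 2 := by
  have hderiv : deriv (fun x => log (Gamma x)) =ᶠ[𝓝 z] digammaSeries :=
    eventually_of_mem (Ioi_mem_nhds hz) fun w hw => (hasDerivAt_log_Gamma hw).deriv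
  rw [trigamma, iteratedDeriv_succ, iteratedDeriv_one, hderiv.deriv_eq,
    (hasDerivAt_digammaSeries hz).deriv]

lemma hasSum_mul_exp_neg_nat_add_one_mul {u : ℝ} (hu : 0 < u) :
    HasSum (fun n : ℕ => u * exp (-((n + 1) * u))) (u / (exp u - 1)) := by
  have hr : exp (-u) < 1 := exp_lt_one_iff.2 (neg_lt_zero.2 hu)
  have hgeom := (hasSum_geometric_of_lt_one (exp_pos (-u)).le hr).mul_left (u * exp (-u))
  have hterm (n : ℕ) : u * exp (-((n + 1) * u)) = u * exp (-u) * exp (-u) ^ n := by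
    rw [mul_assoc, ← pow_succ', ← exp_nat_mul]
    push_cast
    ring_nf
  have hsum : u / (exp u - 1) = u * exp (-u) * (1 - exp (-u))⁻¹ := by
    have : exp u - 1 ≠ 0 := (sub_pos.2 (one_lt_exp_iff.2 hu)).ne'
    rw [exp_neg]
    field_simp
  simpa only [hterm, hsum] using hgeom

lemma integral_exp_neg_mul_exp_neg_nat_add_one_mul {z : ℝ} (hz : 0 < z) (n : ℕ) :
    ∫ s in Ioi 0, exp (-s) * (s / z * exp (-((n + 1) * (s / z)))) = z / (z + n + 1) ^ 2 := by
  have hr : 0 < (z + n + 1) / z := by positivity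
  have h := integral_rpow_mul_exp_neg_mul_Ioi two_pos hr
  norm_num [Real.Gamma_two] at h
  calc ∫ s in Ioi 0, exp (-s) * (s / z * exp (-((n + 1) * (s / z))))
      = ∫ s in Ioi 0, z⁻¹ * (s * exp (-((z + n + 1) / z * s))) := by
        refine setIntegral_congr_fun measurableSet_Ioi fun s _ => ?_
        rw [show -((z + n + 1) / z * s) = -s + -((n + 1) * (s / z)) by field_simp; ring, exp_add]
        ring
    _ = z / (z + n + 1) ^ 2 := by
        rw [integral_const_mul, h]
        field_simp

lemma summable_div_add_sq {z : ℝ} (hz : 0 ≤ z) :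
    Summable fun n : ℕ => z / (z + n + 1) ^ 2 := by
  refine (summable_one_div_nat_add_one_sq.mul_left z).of_nonneg_of_le (fun n => by positivity)
    fun n => ?_
  rw [← div_eq_mul_one_div]
  exact div_le_div_of_nonneg_left hz (by positivity) (by gcongr; linarith)

theorem tsum_div_add_sq_eq_integral {z : ℝ} (hz : 0 < z) :
    ∑' n : ℕ, z / (z + n + 1) ^ 2 = ∫ s in Ioi 0, exp (-s) * (s / z / (exp (s / z) - 1)) := by
  set F : ℕ → ℝ → ℝ := fun n s => exp (-s) * (s / z * exp (-((n + 1) * (s / z))))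
  have hF := integral_exp_neg_mul_exp_neg_nat_add_one_mul hz
  have hF_int (n : ℕ) : IntegrableOn (F n) (Ioi 0) :=
    .of_integral_ne_zero (by rw [hF]; positivity)
  have hF_norm (n : ℕ) : ∫ s in Ioi 0, ‖F n s‖ = z / (z + n + 1) ^ 2 := by
    rw [← hF]
    refine setIntegral_congr_fun measurableSet_Ioi fun s (hs : 0 < s) => ?_
    exact Real.norm_of_nonneg (by positivity)
  have hF_sum : Summable fun n => ∫ s in Ioi 0, ‖F n s‖ := by
    simpa only [hF_norm] using summable_div_add_sq hz.le
  rw [← tsum_congr hF, integral_tsum_of_summable_integral_norm hF_int hF_sum]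
  refine setIntegral_congr_fun measurableSet_Ioi fun s (hs : 0 < s) => ?_
  rw [tsum_mul_left, (hasSum_mul_exp_neg_nat_add_one_mul (div_pos hs hz)).tsum_eq]

lemma antitoneOn_div_exp_sub_one : AntitoneOn (fun u : ℝ => u / (exp u - 1)) (Ioi 0) := by
  intro u (hu : 0 < u) v (hv : 0 < v) huv
  have hslope := convexOn_exp.secant_mono (mem_univ 0) (mem_univ u) (mem_univ v) hu.ne' hv.ne' huv
  simp only [exp_zero, sub_zero] at hslope
  show v / (exp v - 1) ≤ u / (exp u - 1)
  rw [← inv_div (exp v - 1) v, ← inv_div (exp u - 1) u]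
  exact inv_anti₀ (div_pos (sub_pos.2 (one_lt_exp_iff.2 hu)) hu) hslope

theorem monotoneOn_tsum_div_add_sq :
    MonotoneOn (fun z : ℝ => ∑' n : ℕ, z / (z + n + 1) ^ 2) (Ioi 0) := by
  have hint {z : ℝ} (hz : 0 < z) :
      IntegrableOn (fun s => exp (-s) * (s / z / (exp (s / z) - 1))) (Ioi 0) := by
    refine .of_integral_ne_zero ?_
    rw [← tsum_div_add_sq_eq_integral hz]
    exact ((summable_div_add_sq hz.le).tsum_pos (fun n => by positivity) 0 (by positivity)).ne'
  intro z (hz : 0 < z) w (hw : 0 < w) hzw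
  simp only [tsum_div_add_sq_eq_integral hz, tsum_div_add_sq_eq_integral hw]
  refine setIntegral_mono_on (hint hz) (hint hw) measurableSet_Ioi fun s (hs : 0 < s) => ?_
  refine mul_le_mul_of_nonneg_left ?_ (exp_pos _).le
  exact antitoneOn_div_exp_sub_one (div_pos hs hw) (div_pos hs hz)
    (div_le_div_of_nonneg_left hs.le hz hzw)

lemma one_sub_sq_mul_trigamma_div_eq {z : ℝ} (hz : 0 < z) :
    (1 - z ^ 2 * trigamma z) / z = -∑' n : ℕ, z / (z + n + 1) ^ 2 := by
  have hmul : ∑' n : ℕ, z / (z + n + 1) ^ 2 = z * ∑' n : ℕ, 1 / (z + n + 1) ^ 2 := by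
    rw [← tsum_mul_left]
    simp only [mul_one_div]
  rw [trigamma_eq_tsum hz, hmul]
  field_simp
  ring

theorem antitoneOn_one_sub_sq_mul_trigamma_div :
    AntitoneOn (fun z => (1 - z ^ 2 * trigamma z) / z) (Ioi 0) := by
  intro z hz w hw hzw
  simp only [one_sub_sq_mul_trigamma_div_eq hz, one_sub_sq_mul_trigamma_div_eq hw]
  exact neg_le_neg (monotoneOn_tsum_div_add_sq hz hw hzw)

/-- The function `z ↦ 1 - z² ψ'(z)` is subadditive on `(0, ∞)`. -/
theorem one_sub_sq_mul_trigamma_subadditive (x y : ℝ) (hx : 0 < x) (hy : 0 < y) :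
    1 - (x + y) ^ 2 * trigamma (x + y) ≤
      (1 - x ^ 2 * trigamma x) + (1 - y ^ 2 * trigamma y) :=
  map_add_le_of_antitoneOn_div antitoneOn_one_sub_sq_mul_trigamma_div hx hy
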